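/- arXiv:2306.17279 — 5 statements merged into one kernel-verified Lean document; each statement's English description precedes it below -/
import Mathlib

section
/- Consider a finite-horizon MDP with finite state space S, finite action space A, horizon T ≥ 1, fixed initial state s₀ ∈ S, transition probabilities P : S × A × S → ℝ with P(s'|s,a) ≥ 0 and Σ_{s'} P(s'|s,a) = 1, a safe set S_safe ⊆ S, and a parameterized policy π : ℝ^d × S × A → ℝ such that π_θ(a|s) > 0, Σ_a π_θ(a|s) = 1, and θ ↦ π_θ(a|s) is differentiable for every (s,a). For a trajectory τ = (s₀, a₀, s₁, …, a_{T−1}, s_T) define p_θ(τ) = ∏_{t=0}^{T−1} π_θ(a_t|s_t)·P(s_{t+1}|s_t,a_t), and let F(θ) = Σ_τ p_θ(τ)·∏_{t=0}^{T} 1(s_t ∈ S_safe). Define the safety-to-go functions U_t^θ : S → ℝ by the downward recursion U_T^θ(s) = 1(s ∈ S_safe) and, for 0 ≤ t < T, U_t^θ(s) = 1(s ∈ S_safe)·Σ_a π_θ(a|s)·Σ_{s'} P(s'|s,a)·U_{t+1}^θ(s'), and set Q_t^θ(s,a) = Σ_{s'} P(s'|s,a)·U_{t+1}^θ(s'). If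 s₀ ∈ S_safe, then ∇_θ F(θ) = Σ_τ p_θ(τ) · Σ_{t=0}^{T−1} ( ∏_{u=0}^{t} 1(s_u ∈ S_safe) ) · Q_t^θ(s_t, a_t) · ∇_θ log π_θ(a_t|s_t). -/
/-!
Only the policy factors of `p_θ(τ)` depend on `θ`, and they are positive, so
`∇p_θ(τ) = p_θ(τ) ∑_t ∇log π_θ(a_t|s_t)` and `∇F = ∑_t ∑_τ p_θ(τ) G_T^c ∇log π_θ(a_t|s_t)`.
For a fixed `t` and `t < m ≤ T`, weight each trajectory by its first `m` transitions only and
compare the sums of `G_{m-1}^c U_m(s_m) ∇log π_θ(a_t|s_t)` and of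
`G_t^c Q_t(s_t, a_t) ∇log π_θ(a_t|s_t)`. Summing out `a_m` and `s_{m+1}` takes both sums from
`m + 1` to `m`: the first by the recursion defining `U`, the second because `π_θ` and `P` are
stochastic. At `m = t + 1` the two agree once `a_t` and `s_{t+1}` are summed out, by the
definition of `Q_t`, and at `m = T` the first one is the `t`-th term of `∇F`.

A coordinate is summed out without reindexing the sum over trajectories: summing the summand
over all updates at that coordinate multiplies the sum by the number of possible values.
-/

open Finset Function

theorem Fintype.sum_sum_update_eq_card_smul {ι X E : Type*} [Fintype ι] [DecidableEq ι] [Fintype X]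
    [AddCommMonoid E] (i : ι) (F : (ι → X) → E) :
    ∑ g : ι → X, ∑ x, F (update g i x) = Fintype.card X • ∑ g, F g := by
  have hinv : Involutive fun p : (ι → X) × X => (update p.1 i p.2, p.1 i) := fun p => by
    simp
  calc ∑ g : ι → X, ∑ x, F (update g i x)
      = ∑ p : (ι → X) × X, F (hinv.toPerm _ p).1 := (Fintype.sum_prod_type' _).symm
    _ = ∑ p : (ι → X) × X, F p.1 := Equiv.sum_comp (hinv.toPerm _) (fun p => F p.1)
    _ = Fintype.card X • ∑ g, F g := by
      simp [Fintype.sum_prod_type, Finset.smul_sum]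

theorem Fintype.sum_sum_sum_update_prod_eq_card_mul_smul {ι X Y E : Type*} [Fintype ι]
    [DecidableEq ι] [Fintype X] [Fintype Y] [AddCommMonoid E] (i : ι)
    (F : (ι → X) × (ι → Y) → E) :
    ∑ τ : (ι → X) × (ι → Y), ∑ a, ∑ x, F (update τ.1 i a, update τ.2 i x)
      = (Fintype.card X * Fintype.card Y) • ∑ τ, F τ := by
  calc ∑ τ : (ι → X) × (ι → Y), ∑ a, ∑ x, F (update τ.1 i a, update τ.2 i x)
      = ∑ f : ι → X, ∑ a, ∑ g : ι → Y, ∑ x, F (update f i a, update g i x) := by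
        rw [Fintype.sum_prod_type]
        exact Finset.sum_congr rfl fun f _ => Finset.sum_comm
    _ = ∑ f : ι → X, ∑ a, Fintype.card Y • ∑ g, F (update f i a, g) :=
        Finset.sum_congr rfl fun f _ => Finset.sum_congr rfl fun a _ =>
          Fintype.sum_sum_update_eq_card_smul i fun g => F (update f i a, g)
    _ = (Fintype.card X * Fintype.card Y) • ∑ τ, F τ := by
        simp only [← smul_sum]
        rw [Fintype.sum_sum_update_eq_card_smul i (fun f => ∑ g, F (f, g)),
          Fintype.sum_prod_type, mul_comm, mul_smul]

theorem hasFDerivAt_finsetProd_of_ne_zero {ι E : Type*} [NormedAddCommGroup E]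
    [NormedSpace ℝ E] {s : Finset ι} {f : ι → E → ℝ} {x : E}
    (hf : ∀ i ∈ s, DifferentiableAt ℝ (f i) x) (h0 : ∀ i ∈ s, f i x ≠ 0) :
    HasFDerivAt (fun y => ∏ i ∈ s, f i y)
      ((∏ i ∈ s, f i x) • ∑ i ∈ s, fderiv ℝ (fun y => Real.log (f i y)) x) x := by
  classical
  refine (HasFDerivAt.finsetProd fun i hi => (hf i hi).hasFDerivAt).congr_fderiv ?_
  rw [smul_sum]
  refine sum_congr rfl fun i hi => ?_
  rw [((hf i hi).hasFDerivAt.log (h0 i hi)).fderiv, smul_smul, ← prod_erase_mul s _ hi,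
    mul_inv_cancel_right₀ (h0 i hi)]

section Trajectory

variable {S A : Type*} {T : ℕ}

theorem state_update_of_le {s0 : S} {st : (Fin T → S) → ℕ → S} (hst0 : ∀ g, st g 0 = s0)
    (hstS : ∀ g (t : Fin T), st g (t + 1) = g t) (g : Fin T → S) (i : Fin T) (x : S) {u : ℕ}
    (hu : u ≤ i) : st (update g i x) u = st g u := by
  cases u with
  | zero => rw [hst0, hst0]
  | succ j =>
    have hj : j < T := by omega
    rw [(hstS _ ⟨j, hj⟩ : st _ (j + 1) = _), (hstS _ ⟨j, hj⟩ : st _ (j + 1) = _),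
      update_of_ne (Fin.ne_of_val_ne (show j ≠ i by omega))]

def prefixWeight (π : S → A → ℝ) (P : S → A → S → ℝ) (st : (Fin T → S) → ℕ → S) (m : ℕ)
    (τ : (Fin T → A) × (Fin T → S)) : ℝ :=
  ∏ u ∈ univ.filter (fun u : Fin T => (u : ℕ) < m),
    π (st τ.2 u) (τ.1 u) * P (st τ.2 u) (τ.1 u) (st τ.2 (u + 1))

/-- The product runs over `u < m`, so this is the paper's `G_{m-1}^c`. -/
def safePrefix (Ssafe : Set S) [DecidablePred (· ∈ Ssafe)] (st : (Fin T → S) → ℕ → S) (m : ℕ)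
    (g : Fin T → S) : ℝ :=
  ∏ u ∈ range m, if st g u ∈ Ssafe then 1 else 0

variable (π : S → A → ℝ) (P : S → A → S → ℝ) (st : (Fin T → S) → ℕ → S)
  (Ssafe : Set S) [DecidablePred (· ∈ Ssafe)] (U : ℕ → S → ℝ)

theorem prefixWeight_self (τ : (Fin T → A) × (Fin T → S)) :
    prefixWeight π P st T τ =
      ∏ u : Fin T, π (st τ.2 u) (τ.1 u) * P (st τ.2 u) (τ.1 u) (st τ.2 (u + 1)) := by
  simp [prefixWeight]

theorem prefixWeight_succ (i : Fin T) (τ : (Fin T → A) × (Fin T → S)) :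
    prefixWeight π P st (i + 1) τ = prefixWeight π P st i τ *
      (π (st τ.2 i) (τ.1 i) * P (st τ.2 i) (τ.1 i) (st τ.2 (i + 1))) := by
  have : univ.filter (fun u : Fin T => (u : ℕ) < i + 1) =
      insert i (univ.filter fun u : Fin T => (u : ℕ) < i) := by
    ext u
    simp only [mem_filter, mem_univ, true_and, mem_insert, Fin.ext_iff]
    omega
  rw [prefixWeight, prefixWeight, this, prod_insert, mul_comm]
  simp

theorem prefixWeight_update {s0 : S} (hst0 : ∀ g, st g 0 = s0)
    (hstS : ∀ g (t : Fin T), st g (t + 1) = g t) (i : Fin T) (τ : (Fin T → A) × (Fin T → S))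
    (a : A) (x : S) :
    prefixWeight π P st i (update τ.1 i a, update τ.2 i x) = prefixWeight π P st i τ := by
  refine prod_congr rfl fun u hu => ?_
  have hu : (u : ℕ) < i := (mem_filter.mp hu).2
  simp only [state_update_of_le hst0 hstS _ i x hu.le,
    state_update_of_le hst0 hstS _ i x (Nat.succ_le_of_lt hu),
    update_of_ne (Fin.ne_of_val_ne hu.ne)]

theorem safePrefix_succ (m : ℕ) (g : Fin T → S) :
    safePrefix Ssafe st (m + 1) g =
      safePrefix Ssafe st m g * if st g m ∈ Ssafe then 1 else 0 :=
  prod_range_succ _ m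

theorem safePrefix_update {s0 : S}
    (hst0 : ∀ g, st g 0 = s0) (hstS : ∀ g (t : Fin T), st g (t + 1) = g t) {m : ℕ} (i : Fin T)
    (hm : m ≤ i + 1) (g : Fin T → S) (x : S) :
    safePrefix Ssafe st m (update g i x) = safePrefix Ssafe st m g :=
  prod_congr rfl fun u hu => by
    rw [state_update_of_le hst0 hstS g i x (by have := mem_range.mp hu; omega)]

theorem card_mul_smul_sum_prefixWeight_succ [Fintype S] [Fintype A] {E : Type*}
    [AddCommMonoid E] [Module ℝ E] {s0 : S} (hst0 : ∀ g, st g 0 = s0)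
    (hstS : ∀ g (t : Fin T), st g (t + 1) = g t) (i : Fin T)
    (Φ : (Fin T → A) × (Fin T → S) → A → S → E)
    (hΦ : ∀ τ a x, Φ (update τ.1 i a, update τ.2 i x) = Φ τ) :
    ((Fintype.card A * Fintype.card S : ℕ) : ℝ) •
        ∑ τ, prefixWeight π P st (i + 1) τ • Φ τ (τ.1 i) (st τ.2 (i + 1)) =
      ∑ τ, prefixWeight π P st i τ • ∑ a, π (st τ.2 i) a • ∑ x, P (st τ.2 i) a x • Φ τ a x := by
  rw [Nat.cast_smul_eq_nsmul, ← Fintype.sum_sum_sum_update_prod_eq_card_mul_smul i]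
  refine Finset.sum_congr rfl fun τ _ => ?_
  simp only [prefixWeight_succ, prefixWeight_update π P st hst0 hstS, hΦ,
    state_update_of_le hst0 hstS _ i _ le_rfl, hstS, update_self, smul_sum, smul_smul]

theorem card_mul_smul_sum_prefixWeight_succ_of_update_eq [Fintype S] [Fintype A] {E : Type*}
    [AddCommMonoid E] [Module ℝ E] {s0 : S} (hst0 : ∀ g, st g 0 = s0)
    (hstS : ∀ g (t : Fin T), st g (t + 1) = g t) (hPsum : ∀ s a, ∑ s', P s a s' = 1)
    (hsum : ∀ s, ∑ a, π s a = 1) (i : Fin T) (c : (Fin T → A) × (Fin T → S) → E)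
    (hc : ∀ τ a x, c (update τ.1 i a, update τ.2 i x) = c τ) :
    ((Fintype.card A * Fintype.card S : ℕ) : ℝ) • ∑ τ, prefixWeight π P st (i + 1) τ • c τ =
      ∑ τ, prefixWeight π P st i τ • c τ := by
  simpa only [← sum_smul, hPsum, hsum, one_smul] using
    card_mul_smul_sum_prefixWeight_succ π P st hst0 hstS i (fun τ _ _ => c τ)
      fun τ a x => by rw [hc]

theorem card_mul_smul_sum_prefixWeight_succ_safetyToGo [Fintype S] [Fintype A] {E : Type*}
    [AddCommMonoid E] [Module ℝ E] {s0 : S} (hst0 : ∀ g, st g 0 = s0)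
    (hstS : ∀ g (t : Fin T), st g (t + 1) = g t) (hUrec : ∀ t < T, ∀ s,
      U t s = (if s ∈ Ssafe then 1 else 0) * ∑ a, π s a * ∑ s', P s a s' * U (t + 1) s')
    {t i : Fin T} (hti : t < i) (ℓ : S → A → E) :
    ((Fintype.card A * Fintype.card S : ℕ) : ℝ) • ∑ τ, prefixWeight π P st (i + 1) τ •
        (safePrefix Ssafe st (i + 1) τ.2 * U (i + 1) (st τ.2 (i + 1))) • ℓ (st τ.2 t) (τ.1 t) =
      ∑ τ, prefixWeight π P st i τ •
        (safePrefix Ssafe st i τ.2 * U i (st τ.2 i)) • ℓ (st τ.2 t) (τ.1 t) := by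
  rw [card_mul_smul_sum_prefixWeight_succ π P st hst0 hstS i
    (fun τ _ x => (safePrefix Ssafe st (i + 1) τ.2 * U (i + 1) x) • ℓ (st τ.2 t) (τ.1 t))
    fun τ a x => by
      dsimp only
      rw [safePrefix_update st Ssafe hst0 hstS i le_rfl,
        state_update_of_le hst0 hstS _ i _ hti.le, update_of_ne hti.ne]]
  refine Finset.sum_congr rfl fun τ _ => congrArg _ ?_
  simp only [smul_smul, ← sum_smul]
  rw [hUrec i i.isLt, safePrefix_succ]
  congr 1
  simp only [mul_sum]
  exact Finset.sum_congr rfl fun a _ => Finset.sum_congr rfl fun x _ => by ring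

theorem sum_prefixWeight_succ_smul_safetyToGo_eq_Q [Fintype S] [Fintype A] [Nonempty A]
    {E : Type*} [AddCommGroup E] [Module ℝ E] {s0 : S} (hst0 : ∀ g, st g 0 = s0)
    (hstS : ∀ g (t : Fin T), st g (t + 1) = g t) (hPsum : ∀ s a, ∑ s', P s a s' = 1)
    (t : Fin T) (ℓ : S → A → E) :
    ∑ τ, prefixWeight π P st (t + 1) τ •
        (safePrefix Ssafe st (t + 1) τ.2 * U (t + 1) (st τ.2 (t + 1))) • ℓ (st τ.2 t) (τ.1 t) =
      ∑ τ, prefixWeight π P st (t + 1) τ •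
        (safePrefix Ssafe st (t + 1) τ.2 * ∑ s', P (st τ.2 t) (τ.1 t) s' * U (t + 1) s') •
          ℓ (st τ.2 t) (τ.1 t) := by
  have hpast : ∀ (τ : (Fin T → A) × (Fin T → S)) x,
      safePrefix Ssafe st (t + 1) (update τ.2 t x) = safePrefix Ssafe st (t + 1) τ.2 ∧
        st (update τ.2 t x) t = st τ.2 t := fun τ x =>
    ⟨safePrefix_update st Ssafe hst0 hstS t le_rfl _ x, state_update_of_le hst0 hstS _ t x le_rfl⟩
  have : Nonempty S := ⟨s0⟩
  refine smul_right_injective E (by positivity : ((Fintype.card A * Fintype.card S : ℕ) : ℝ) ≠ 0) ?_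
  beta_reduce
  rw [card_mul_smul_sum_prefixWeight_succ π P st hst0 hstS t
      (fun τ a x => (safePrefix Ssafe st (t + 1) τ.2 * U (t + 1) x) • ℓ (st τ.2 t) a)
      fun τ a x => by rw [(hpast τ x).1, (hpast τ x).2],
    card_mul_smul_sum_prefixWeight_succ π P st hst0 hstS t
      (fun τ a x => (safePrefix Ssafe st (t + 1) τ.2 * ∑ s', P (st τ.2 t) a s' * U (t + 1) s') •
        ℓ (st τ.2 t) a)
      fun τ a x => by rw [(hpast τ x).1, (hpast τ x).2]]
  refine Finset.sum_congr rfl fun τ _ =>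
    congrArg _ <| Finset.sum_congr rfl fun a _ => congrArg _ ?_
  simp only [smul_smul, ← sum_smul]
  rw [← sum_mul, hPsum, one_mul]
  simp only [mul_left_comm _ (safePrefix Ssafe st _ τ.2), ← mul_sum]

theorem sum_prefixWeight_smul_safetyToGo [Fintype S] [Fintype A]
    {E : Type*} [AddCommGroup E] [Module ℝ E] {s0 : S} (hst0 : ∀ g, st g 0 = s0)
    (hstS : ∀ g (t : Fin T), st g (t + 1) = g t) (hPsum : ∀ s a, ∑ s', P s a s' = 1)
    (hsum : ∀ s, ∑ a, π s a = 1) (hUrec : ∀ t < T, ∀ s,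
      U t s = (if s ∈ Ssafe then 1 else 0) * ∑ a, π s a * ∑ s', P s a s' * U (t + 1) s')
    (t : Fin T) (ℓ : S → A → E) {m : ℕ} (htm : t < m) (hmT : m ≤ T) :
    ∑ τ, prefixWeight π P st m τ •
        (safePrefix Ssafe st m τ.2 * U m (st τ.2 m)) • ℓ (st τ.2 t) (τ.1 t) =
      ∑ τ, prefixWeight π P st m τ •
        (safePrefix Ssafe st (t + 1) τ.2 * ∑ s', P (st τ.2 t) (τ.1 t) s' * U (t + 1) s') •
          ℓ (st τ.2 t) (τ.1 t) := by
  obtain ⟨a, -⟩ := exists_ne_zero_of_sum_ne_zero ((hsum s0).symm ▸ one_ne_zero)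
  have : Nonempty A := ⟨a⟩
  have : Nonempty S := ⟨s0⟩
  have hκ : ((Fintype.card A * Fintype.card S : ℕ) : ℝ) ≠ 0 := by positivity
  induction m, htm using Nat.le_induction with
  | base => exact sum_prefixWeight_succ_smul_safetyToGo_eq_Q π P st Ssafe U hst0 hstS hPsum t ℓ
  | succ n htn ih =>
    obtain ⟨i, rfl⟩ : ∃ i : Fin T, (i : ℕ) = n := ⟨⟨n, hmT⟩, rfl⟩
    have hti : t < i := htn
    refine smul_right_injective E hκ ?_
    beta_reduce
    rw [card_mul_smul_sum_prefixWeight_succ_safetyToGo π P st Ssafe U hst0 hstS hUrec hti,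
      card_mul_smul_sum_prefixWeight_succ_of_update_eq π P st hst0 hstS hPsum hsum i _
        fun τ a x => by
          dsimp only
          rw [safePrefix_update st Ssafe hst0 hstS i (by omega),
            state_update_of_le hst0 hstS _ i _ hti.le,
            update_of_ne hti.ne]]
    exact ih (by omega)

theorem sum_trajectory_safe_smul_eq_safeQ_smul [Fintype S] [Fintype A] {E : Type*}
    [AddCommGroup E] [Module ℝ E] {s0 : S} (hst0 : ∀ g, st g 0 = s0)
    (hstS : ∀ g (t : Fin T), st g (t + 1) = g t) (hPsum : ∀ s a, ∑ s', P s a s' = 1)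
    (hsum : ∀ s, ∑ a, π s a = 1) (hUT : ∀ s, U T s = if s ∈ Ssafe then 1 else 0)
    (hUrec : ∀ t < T, ∀ s,
      U t s = (if s ∈ Ssafe then 1 else 0) * ∑ a, π s a * ∑ s', P s a s' * U (t + 1) s')
    (t : Fin T) (ℓ : S → A → E) :
    ∑ τ : (Fin T → A) × (Fin T → S),
        ((∏ u : Fin T, π (st τ.2 u) (τ.1 u) * P (st τ.2 u) (τ.1 u) (st τ.2 (u + 1))) *
          ∏ u ∈ range (T + 1), if st τ.2 u ∈ Ssafe then 1 else 0) • ℓ (st τ.2 t) (τ.1 t) =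
      ∑ τ : (Fin T → A) × (Fin T → S),
        ((∏ u : Fin T, π (st τ.2 u) (τ.1 u) * P (st τ.2 u) (τ.1 u) (st τ.2 (u + 1))) *
          (∏ u ∈ range (t + 1), if st τ.2 u ∈ Ssafe then 1 else 0) *
          ∑ s', P (st τ.2 t) (τ.1 t) s' * U (t + 1) s') • ℓ (st τ.2 t) (τ.1 t) := by
  have h := sum_prefixWeight_smul_safetyToGo π P st Ssafe U hst0 hstS hPsum hsum hUrec t ℓ
    t.isLt le_rfl
  simp only [prefixWeight_self, smul_smul, hUT, ← safePrefix_succ] at h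
  simp only [safePrefix] at h
  simpa only [mul_assoc] using h

end Trajectory

theorem stmt_6_general {d : ℕ} {S A : Type*} [Fintype S] [Fintype A]
    (T : ℕ) (s0 : S)
    (P : S → A → S → ℝ)
    (hPsum : ∀ s a, ∑ s', P s a s' = 1)
    (Ssafe : Set S) [DecidablePred (· ∈ Ssafe)]
    (pol : EuclideanSpace ℝ (Fin d) → S → A → ℝ)
    (hpos : ∀ θ s a, 0 < pol θ s a)
    (hsum : ∀ θ s, ∑ a, pol θ s a = 1)
    (hdiff : ∀ s a, Differentiable ℝ (fun θ => pol θ s a))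
    (st : (Fin T → S) → ℕ → S)
    (hst0 : ∀ traj, st traj 0 = s0)
    (hstS : ∀ traj (t : Fin T), st traj ((t : ℕ) + 1) = traj t)
    (pTraj : EuclideanSpace ℝ (Fin d) → ((Fin T → A) × (Fin T → S)) → ℝ)
    (hpTraj : ∀ θ τ, pTraj θ τ =
      ∏ t : Fin T, pol θ (st τ.2 (t : ℕ)) (τ.1 t) *
        P (st τ.2 (t : ℕ)) (τ.1 t) (st τ.2 ((t : ℕ) + 1)))
    (F : EuclideanSpace ℝ (Fin d) → ℝ)
    (hF : ∀ θ, F θ = ∑ τ : (Fin T → A) × (Fin T → S),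
      pTraj θ τ * ∏ t ∈ Finset.range (T + 1), (if st τ.2 t ∈ Ssafe then (1 : ℝ) else 0))
    -- safety-to-go functions
    (U : EuclideanSpace ℝ (Fin d) → ℕ → S → ℝ)
    (hUT : ∀ θ s, U θ T s = (if s ∈ Ssafe then (1 : ℝ) else 0))
    (hUrec : ∀ θ (t : ℕ), t < T → ∀ s, U θ t s =
      (if s ∈ Ssafe then (1 : ℝ) else 0) *
        ∑ a, pol θ s a * ∑ s', P s a s' * U θ (t + 1) s')
    (Q : EuclideanSpace ℝ (Fin d) → ℕ → S → A → ℝ)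
    (hQ : ∀ θ t s a, Q θ t s a = ∑ s', P s a s' * U θ (t + 1) s') :
    ∀ θ, fderiv ℝ F θ = ∑ τ : (Fin T → A) × (Fin T → S),
      ∑ t : Fin T,
        (pTraj θ τ *
          (∏ u ∈ Finset.range ((t : ℕ) + 1), (if st τ.2 u ∈ Ssafe then (1 : ℝ) else 0)) *
          Q θ (t : ℕ) (st τ.2 (t : ℕ)) (τ.1 t)) •
        fderiv ℝ (fun θ' => Real.log (pol θ' (st τ.2 (t : ℕ)) (τ.1 t))) θ := by
  intro θ
  have hF' : HasFDerivAt F (∑ τ : (Fin T → A) × (Fin T → S),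
      (pTraj θ τ * ∏ u ∈ range (T + 1), if st τ.2 u ∈ Ssafe then 1 else 0) •
        ∑ t : Fin T, fderiv ℝ (fun θ' => Real.log (pol θ' (st τ.2 t) (τ.1 t))) θ) θ := by
    rw [funext hF]
    refine HasFDerivAt.fun_sum fun τ _ => ?_
    have hprod := hasFDerivAt_finsetProd_of_ne_zero (s := univ)
      (f := fun (u : Fin T) θ' => pol θ' (st τ.2 u) (τ.1 u)) (x := θ)
      (fun u _ => (hdiff _ _).differentiableAt) fun u _ => (hpos θ _ _).ne'
    simp only [hpTraj, prod_mul_distrib, mul_assoc]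
    refine (hprod.mul_const _).congr_fderiv ?_
    rw [smul_smul, mul_comm]
  simp only [hF'.fderiv, smul_sum, hpTraj, hQ]
  rw [sum_comm]
  exact (Finset.sum_congr rfl fun t _ => sum_trajectory_safe_smul_eq_safeQ_smul (pol θ) P st Ssafe
    (U θ) hst0 hstS hPsum (hsum θ) (hUT θ) (hUrec θ) t
    fun s a => fderiv ℝ (fun θ' => Real.log (pol θ' s a)) θ).trans sum_comm

/-- SPG-Actor-Critic, Corollary 2: with safety-to-go functions
`U t s` defined by the downward recursion `U T s = 1(s ∈ Ssafe)`,
`U t s = 1(s ∈ Ssafe) · ∑_a pol θ s a · ∑_{s'} P s a s' · U (t+1) s'`, and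
`Q t s a = ∑_{s'} P s a s' · U (t+1) s'`, if `s0 ∈ Ssafe` then
`∇F(θ) = ∑_τ pTraj θ τ · ∑_{t=0}^{T-1} (∏_{u=0}^{t} 1(s_u ∈ Ssafe)) ·
Q t (s_t) (a_t) · ∇log pol θ (s_t) (a_t)`. -/
theorem stmt_6 {d : ℕ} {S A : Type*} [Fintype S] [Fintype A] [DecidableEq S] [DecidableEq A]
    (T : ℕ) (hT : 1 ≤ T) (s0 : S)
    (P : S → A → S → ℝ) (hPnn : ∀ s a s', 0 ≤ P s a s')
    (hPsum : ∀ s a, ∑ s', P s a s' = 1)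
    (Ssafe : Set S) [DecidablePred (· ∈ Ssafe)]
    (pol : EuclideanSpace ℝ (Fin d) → S → A → ℝ)
    (hpos : ∀ θ s a, 0 < pol θ s a)
    (hsum : ∀ θ s, ∑ a, pol θ s a = 1)
    (hdiff : ∀ s a, Differentiable ℝ (fun θ => pol θ s a))
    (st : (Fin T → S) → ℕ → S)
    (hst0 : ∀ traj, st traj 0 = s0)
    (hstS : ∀ traj (t : Fin T), st traj ((t : ℕ) + 1) = traj t)
    (pTraj : EuclideanSpace ℝ (Fin d) → ((Fin T → A) × (Fin T → S)) → ℝ)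
    (hpTraj : ∀ θ τ, pTraj θ τ =
      ∏ t : Fin T, pol θ (st τ.2 (t : ℕ)) (τ.1 t) *
        P (st τ.2 (t : ℕ)) (τ.1 t) (st τ.2 ((t : ℕ) + 1)))
    (F : EuclideanSpace ℝ (Fin d) → ℝ)
    (hF : ∀ θ, F θ = ∑ τ : (Fin T → A) × (Fin T → S),
      pTraj θ τ * ∏ t ∈ Finset.range (T + 1), (if st τ.2 t ∈ Ssafe then (1 : ℝ) else 0))
    -- safety-to-go functions
    (U : EuclideanSpace ℝ (Fin d) → ℕ → S → ℝ)
    (hUT : ∀ θ s, U θ T s = (if s ∈ Ssafe then (1 : ℝ) else 0))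
    (hUrec : ∀ θ (t : ℕ), t < T → ∀ s, U θ t s =
      (if s ∈ Ssafe then (1 : ℝ) else 0) *
        ∑ a, pol θ s a * ∑ s', P s a s' * U θ (t + 1) s')
    (Q : EuclideanSpace ℝ (Fin d) → ℕ → S → A → ℝ)
    (hQ : ∀ θ t s a, Q θ t s a = ∑ s', P s a s' * U θ (t + 1) s')
    (hs0 : s0 ∈ Ssafe) :
    ∀ θ, fderiv ℝ F θ = ∑ τ : (Fin T → A) × (Fin T → S),
      ∑ t : Fin T,
        (pTraj θ τ *
          (∏ u ∈ Finset.range ((t : ℕ) + 1), (if st τ.2 u ∈ Ssafe then (1 : ℝ) else 0)) *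
          Q θ (t : ℕ) (st τ.2 (t : ℕ)) (τ.1 t)) •
        fderiv ℝ (fun θ' => Real.log (pol θ' (st τ.2 (t : ℕ)) (τ.1 t))) θ :=
  stmt_6_general T s0 P hPsum Ssafe pol hpos hsum hdiff st hst0 hstS pTraj hpTraj F hF U hUT hUrec Q
    hQ
end

section
/- Let (Ω, ℱ, ℙ) be a probability space, (ℱ_t)_{t∈ℕ} a filtration (ℱ_s ⊆ ℱ_t ⊆ ℱ whenever s ≤ t), Z : Ω → ℝ measurable with 0 ≤ Z ≤ 1, and T ≥ 1 a natural number. Define the random variables X = Σ_{t=0}^{T−1} Z = T·Z and Y = Σ_{t=0}^{T−1} E[Z | ℱ_t]. Then E[X] = E[Y] and Var(X) ≥ Var(Y). -/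
/-!
Each `E[Z | ℱ t]` has the same mean as `Z` and, by the law of total variance, no larger
variance. Since `2 cov(U, V) ≤ Var U + Var V`, the variance of a sum of `T` square-integrable
variables is at most `T` times the sum of their variances, so
`Var Y ≤ T · ∑ₜ Var E[Z | ℱ t] ≤ T² Var Z = Var X`.
-/

open MeasureTheory ProbabilityTheory Finset

namespace ProbabilityTheory

variable {Ω : Type*} {m0 : MeasurableSpace Ω} {μ : Measure Ω}

lemma variance_condExp_le [IsProbabilityMeasure μ] {m : MeasurableSpace Ω} (hm : m ≤ m0)
    {X : Ω → ℝ} (hX : MemLp X 2 μ) : Var[μ[X | m]; μ] ≤ Var[X; μ] := by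
  have hcondVar : 0 ≤ μ[Var[X; μ | m]] :=
    integral_nonneg_of_ae <| condExp_nonneg <| ae_of_all _ fun ω ↦ sq_nonneg _
  linarith [integral_condVar_add_variance_condExp hm hX]

lemma two_mul_covariance_le_add_variance [IsFiniteMeasure μ] {U V : Ω → ℝ}
    (hU : MemLp U 2 μ) (hV : MemLp V 2 μ) : 2 * cov[U, V; μ] ≤ Var[U; μ] + Var[V; μ] := by
  linarith [variance_sub hU hV, variance_nonneg (U - V) μ]

lemma variance_fun_sum_le_card_mul_sum [IsFiniteMeasure μ] {ι : Type*} {s : Finset ι}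
    {X : ι → Ω → ℝ} (hX : ∀ i ∈ s, MemLp (X i) 2 μ) :
    Var[fun ω ↦ ∑ i ∈ s, X i ω; μ] ≤ #s * ∑ i ∈ s, Var[X i; μ] := by
  rw [variance_fun_sum' hX]
  calc ∑ i ∈ s, ∑ j ∈ s, cov[X i, X j; μ]
      ≤ ∑ i ∈ s, ∑ j ∈ s, (Var[X i; μ] + Var[X j; μ]) / 2 := by
        gcongr with i hi j hj
        linarith [two_mul_covariance_le_add_variance (hX i hi) (hX j hj)]
    _ = #s * ∑ i ∈ s, Var[X i; μ] := by
        simp only [add_div, sum_add_distrib, sum_const, nsmul_eq_mul, ← mul_sum, ← sum_div]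
        ring

end ProbabilityTheory

theorem stmt_7_general {Ω : Type*} {m0 : MeasurableSpace Ω} (μ : Measure Ω) [IsProbabilityMeasure μ]
    (ℱ : Filtration ℕ m0) (Z : Ω → ℝ) (hZ : Measurable Z)
    (hZ0 : ∀ ω, 0 ≤ Z ω) (hZ1 : ∀ ω, Z ω ≤ 1)
    (T : ℕ)
    (X Y : Ω → ℝ)
    (hX : ∀ ω, X ω = ∑ t ∈ Finset.range T, Z ω)
    (hY : ∀ ω, Y ω = ∑ t ∈ Finset.range T, (μ[Z | ℱ t]) ω) :
    ∫ ω, X ω ∂μ = ∫ ω, Y ω ∂μ ∧ variance Y μ ≤ variance X μ := by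
  have hZ2 : MemLp Z 2 μ := MemLp.of_bound hZ.aestronglyMeasurable 1 <| ae_of_all _ fun ω ↦ by
    rw [Real.norm_eq_abs, abs_le]
    constructor <;> linarith [hZ0 ω, hZ1 ω]
  have hXeq : X = fun ω ↦ (T : ℝ) * Z ω := funext fun ω ↦ by simp [hX]
  have hYeq : Y = fun ω ↦ ∑ t ∈ range T, (μ[Z | ℱ t]) ω := funext hY
  refine ⟨?_, ?_⟩
  · rw [hXeq, hYeq, integral_const_mul, integral_finsetSum _ fun t _ ↦ integrable_condExp]
    simp [integral_condExp (ℱ.le _)]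
  · calc Var[Y; μ] ≤ T * ∑ t ∈ range T, Var[μ[Z | ℱ t]; μ] := by
          simpa [hYeq] using variance_fun_sum_le_card_mul_sum (s := range T)
            (X := fun t ↦ μ[Z | ℱ t]) fun t _ ↦ hZ2.condExp one_le_two
      _ ≤ T * ∑ t ∈ range T, Var[Z; μ] := by
          gcongr with t
          exact variance_condExp_le (ℱ.le t) hZ2
      _ = Var[X; μ] := by
          rw [hXeq, variance_const_mul, sum_const, card_range, nsmul_eq_mul]
          ring

/-- variance reduction, Theorem 3: for a `[0,1]`-valued random
variable `Z`, a filtration `(ℱ t)` and `X = ∑_{t<T} Z = T·Z`,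
`Y = ∑_{t<T} E[Z | ℱ t]`, one has `E[X] = E[Y]` and `Var(X) ≥ Var(Y)`. -/
theorem stmt_7 {Ω : Type*} {m0 : MeasurableSpace Ω} (μ : Measure Ω) [IsProbabilityMeasure μ]
    (ℱ : Filtration ℕ m0) (Z : Ω → ℝ) (hZ : Measurable Z)
    (hZ0 : ∀ ω, 0 ≤ Z ω) (hZ1 : ∀ ω, Z ω ≤ 1)
    (T : ℕ) (hT : 1 ≤ T)
    (X Y : Ω → ℝ)
    (hX : ∀ ω, X ω = ∑ t ∈ Finset.range T, Z ω)
    (hY : ∀ ω, Y ω = ∑ t ∈ Finset.range T, (μ[Z | ℱ t]) ω) :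
    ∫ ω, X ω ∂μ = ∫ ω, Y ω ∂μ ∧ variance Y μ ≤ variance X μ :=
  stmt_7_general μ ℱ Z hZ hZ0 hZ1 T X Y hX hY
end

section
/- Stochastic primal-dual setup: let (Ω, ℱ, ℙ) be a probability space, Θ a measurable space, δ ∈ (0, 1/2), and V, g : Θ → ℝ measurable with |g(θ)| ≤ 1 − δ for all θ; assume the dual function d(λ) := sup_{θ∈Θ} (V(θ) + λ·g(θ)) is finite for every λ ≥ 0, and that λ⋆ ≥ 0 satisfies d(λ⋆) = inf_{λ ≥ 0} d(λ). Fix η > 0, ε ≥ 0. Let (λ_k)_{k≥0}, (ĝ_k)_{k≥0} be real-valued random variables and (θ_k)_{k≥1} Θ-valued random variables such that for every k ≥ 0, almost surely: λ₀ ≥ 0; |ĝ_k| ≤ 1 − δ; λ_{k+1} = max(0, λ_k − η·ĝ_k); d(λ_k) ≤ V(θ_{k+1}) + λ_k·g(θ_{k+1}) + ε; λ_k is σ(θ_{k+1})-measurable and E[ĝ_k | σ(θ_{k+1})] = g(θ_{k+1}); λ₀ is square-integrable and each V(θ_{k+1}) is integrable. Suppose additionally there exist θ̃ ∈ Θ and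 C > 0 with g(θ̃) ≥ C (strict feasibility). Then sup_{k ≥ 1} (1/k)·Σ_{u=0}^{k−1} E[λ_u] < ∞. -/
open MeasureTheory Finset

/-! Lyapunov argument on the second moments `s k = E[λ_k²]`. Since `(max 0 t)² ≤ t²`, one step
gives `λ_{k+1}² ≤ λ_k² - 2η λ_k ĝ_k + η²(1-δ)²`, and pulling `λ_k` out of the conditional
expectation turns `E[λ_k ĝ_k]` into `E[λ_k g(θ_{k+1})]`. The approximate primal step together with
Slater's bound `d λ ≥ V θ̃ + C λ` gives `λ_k g(θ_{k+1}) ≥ C (λ_k - K)` with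
`K = (d 0 + ε - V θ̃) / C`, hence `s (k+1) ≤ s k - 2ηC E[λ_k] + B`; telescoping bounds the
Cesàro means of `E[λ_k]` by `(s 0 + B) / (2ηC)`. -/

theorem mul_le_dual_sub_of_le {Θ : Type*} {V g : Θ → ℝ} {d : ℝ → ℝ}
    (hd : ∀ l : ℝ, 0 ≤ l → IsLUB (Set.range fun θ => V θ + l * g θ) (d l))
    {θ : Θ} {C l : ℝ} (hC : C ≤ g θ) (hl : 0 ≤ l) : C * l ≤ d l - V θ := by
  have := (hd l hl).1 ⟨θ, rfl⟩
  nlinarith [mul_le_mul_of_nonneg_left hC hl]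

theorem sum_le_of_drift {s a : ℕ → ℝ} {c B : ℝ} (hdrift : ∀ k, s (k + 1) ≤ s k - c * a k + B)
    (k : ℕ) : s k + c * ∑ u ∈ range k, a u ≤ s 0 + k * B := by
  induction k with
  | zero => simp
  | succ k ih =>
    rw [sum_range_succ, mul_add]
    push_cast
    linarith [hdrift k]

theorem cesaro_mean_le_of_drift {s a : ℕ → ℝ} {c B : ℝ} (hc : 0 < c) (hs : ∀ k, 0 ≤ s k)
    (hdrift : ∀ k, s (k + 1) ≤ s k - c * a k + B) {k : ℕ} (hk : 1 ≤ k) :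
    (1 / (k : ℝ)) * ∑ u ∈ range k, a u ≤ (s 0 + B) / c := by
  have hk : (1 : ℝ) ≤ k := by exact_mod_cast hk
  have hsum := sum_le_of_drift hdrift k
  rw [div_mul_eq_mul_div, one_mul, div_le_div_iff₀ (by linarith) hc]
  nlinarith [hs k, hs 0]

theorem sq_max_zero_sub_le {x y η b : ℝ} (hy : |y| ≤ b) :
    max 0 (x - η * y) ^ 2 ≤ x ^ 2 - 2 * η * (x * y) + η ^ 2 * b ^ 2 := by
  have hsq : max 0 (x - η * y) ^ 2 ≤ (x - η * y) ^ 2 := by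
    rcases le_total (x - η * y) 0 with h | h
    · simp [max_eq_left h, sq_nonneg]
    · rw [max_eq_right h]
  have hyb : y ^ 2 ≤ b ^ 2 := sq_le_sq' (abs_le.1 hy).1 (abs_le.1 hy).2
  nlinarith [mul_le_mul_of_nonneg_left hyb (sq_nonneg η)]

theorem max_zero_sub_le_abs_add {x y η b : ℝ} (hη : 0 ≤ η) (hy : |y| ≤ b) :
    max 0 (x - η * y) ≤ |x| + η * b := by
  have := mul_le_mul_of_nonneg_left ((neg_le_abs y).trans hy) hη
  exact max_le (by nlinarith [abs_nonneg x, abs_nonneg y]) (by linarith [le_abs_self x])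

section ProjectedStep

variable {Ω : Type*} {mΩ : MeasurableSpace Ω} {μ : Measure Ω} {x x' y : Ω → ℝ} {η b : ℝ}

theorem memLp_two_of_projected_step [IsFiniteMeasure μ] (hη : 0 ≤ η) (hx : MemLp x 2 μ)
    (hx'm : AEStronglyMeasurable x' μ) (hyb : ∀ᵐ ω ∂μ, |y ω| ≤ b)
    (hstep : ∀ᵐ ω ∂μ, x' ω = max 0 (x ω - η * y ω)) : MemLp x' 2 μ := by
  refine (hx.norm.add (memLp_const (η * b))).of_le hx'm ?_
  filter_upwards [hstep, hyb] with ω hs hy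
  rw [Real.norm_eq_abs, Real.norm_eq_abs, hs, abs_of_nonneg (le_max_left _ _)]
  exact (max_zero_sub_le_abs_add hη hy).trans (le_abs_self _)

variable [IsProbabilityMeasure μ]

theorem integral_sq_projected_step_le_of_nonneg (hη : 0 ≤ η)
    (hx : MemLp x 2 μ) (hx' : MemLp x' 2 μ) (hx0 : ∀ᵐ ω ∂μ, 0 ≤ x ω)
    (hyb : ∀ᵐ ω ∂μ, |y ω| ≤ b) (hstep : ∀ᵐ ω ∂μ, x' ω = max 0 (x ω - η * y ω)) :
    ∫ ω, x' ω ^ 2 ∂μ ≤ ∫ ω, x ω ^ 2 ∂μ + 2 * η * b * ∫ ω, x ω ∂μ + η ^ 2 * b ^ 2 := by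
  have hxi := hx.integrable one_le_two
  have hpt : ∀ᵐ ω ∂μ, x' ω ^ 2 ≤ x ω ^ 2 + 2 * η * b * x ω + η ^ 2 * b ^ 2 := by
    filter_upwards [hstep, hyb, hx0] with ω hs hy h0
    have h := max_zero_sub_le_abs_add (x := x ω) hη hy
    rw [abs_of_nonneg h0] at h
    rw [hs]
    nlinarith [le_max_left 0 (x ω - η * y ω)]
  have hlin : Integrable (fun ω => x ω ^ 2 + 2 * η * b * x ω) μ :=
    hx.integrable_sq.add (hxi.const_mul _)
  refine (integral_mono_ae hx'.integrable_sq
    (g := fun ω => x ω ^ 2 + 2 * η * b * x ω + η ^ 2 * b ^ 2) (hlin.add (integrable_const _))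
    hpt).trans_eq ?_
  rw [integral_add hlin (integrable_const _), integral_add hx.integrable_sq (hxi.const_mul _),
    integral_const_mul, integral_const, probReal_univ, one_smul]


theorem integral_sq_projected_step_le_of_condExp {m : MeasurableSpace Ω} (hm : m ≤ mΩ)
    {h : Ω → ℝ} {C K : ℝ} (hη : 0 ≤ η) (hx : MemLp x 2 μ) (hx' : MemLp x' 2 μ)
    (hxm : StronglyMeasurable[m] x) (hy : Integrable y μ) (hyb : ∀ᵐ ω ∂μ, |y ω| ≤ b)
    (hstep : ∀ᵐ ω ∂μ, x' ω = max 0 (x ω - η * y ω)) (hcond : μ[y | m] =ᵐ[μ] h)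
    (hlow : ∀ᵐ ω ∂μ, C * (x ω - K) ≤ x ω * h ω) :
    ∫ ω, x' ω ^ 2 ∂μ ≤ ∫ ω, x ω ^ 2 ∂μ - 2 * η * (C * (∫ ω, x ω ∂μ - K)) + η ^ 2 * b ^ 2 := by
  have hxi := hx.integrable one_le_two
  have hxy : Integrable (fun ω => x ω * y ω) μ :=
    hxi.mul_bdd hy.1 (hyb.mono fun ω hω => by rwa [Real.norm_eq_abs])
  have hpull : μ[x * y | m] =ᵐ[μ] x * h :=
    (condExp_mul_of_stronglyMeasurable_left hxm hxy hy).trans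
      (hcond.mono fun ω hω => by simp only [Pi.mul_apply, hω])
  have hcross : C * (∫ ω, x ω ∂μ - K) ≤ ∫ ω, x ω * y ω ∂μ :=
    calc C * (∫ ω, x ω ∂μ - K) = ∫ ω, C * (x ω - K) ∂μ := by
          rw [integral_const_mul, integral_sub hxi (integrable_const _), integral_const,
            probReal_univ, one_smul]
      _ ≤ ∫ ω, μ[x * y | m] ω ∂μ := by
          refine integral_mono_ae ((hxi.sub (integrable_const K)).const_mul C)
            integrable_condExp ?_
          filter_upwards [hlow, hpull] with ω hl hp
          rwa [hp]
      _ = ∫ ω, x ω * y ω ∂μ := integral_condExp hm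
  have hpt : ∀ᵐ ω ∂μ, x' ω ^ 2 ≤ x ω ^ 2 - 2 * η * (x ω * y ω) + η ^ 2 * b ^ 2 := by
    filter_upwards [hstep, hyb] with ω hs hy
    rw [hs]
    exact sq_max_zero_sub_le hy
  have hlin : Integrable (fun ω => x ω ^ 2 - 2 * η * (x ω * y ω)) μ :=
    hx.integrable_sq.sub (hxy.const_mul _)
  have hsq := integral_mono_ae hx'.integrable_sq
    (g := fun ω => x ω ^ 2 - 2 * η * (x ω * y ω) + η ^ 2 * b ^ 2)
    (hlin.add (integrable_const _)) hpt
  rw [integral_add hlin (integrable_const _), integral_sub hx.integrable_sq (hxy.const_mul _),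
    integral_const_mul, integral_const, probReal_univ, one_smul] at hsq
  nlinarith [mul_le_mul_of_nonneg_left hcross (by positivity : 0 ≤ 2 * η)]

theorem integral_sq_projected_step_le {m : MeasurableSpace Ω} (hm : m ≤ mΩ) {h : Ω → ℝ}
    {C K : ℝ} (hη : 0 ≤ η) (hb : 0 ≤ b) (hC : 0 < C) (hK : 0 ≤ K) (hx : MemLp x 2 μ)
    (hx' : MemLp x' 2 μ) (hxm : StronglyMeasurable[m] x) (hx0 : ∀ᵐ ω ∂μ, 0 ≤ x ω)
    (hyb : ∀ᵐ ω ∂μ, |y ω| ≤ b) (hstep : ∀ᵐ ω ∂μ, x' ω = max 0 (x ω - η * y ω))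
    (hcond : μ[y | m] =ᵐ[μ] h) (hlow : ∀ᵐ ω ∂μ, C * (x ω - K) ≤ x ω * h ω) :
    ∫ ω, x' ω ^ 2 ∂μ ≤
      ∫ ω, x ω ^ 2 ∂μ - 2 * η * C * ∫ ω, x ω ∂μ + (2 * η * (C + b) * K + η ^ 2 * b ^ 2) := by
  by_cases hy : Integrable y μ
  · have := integral_sq_projected_step_le_of_condExp hm hη hx hx' hxm hy hyb hstep hcond hlow
    nlinarith [mul_nonneg (mul_nonneg hη hb) hK]
  · -- `μ[y | m]` is the junk value `0`, so `hlow` forces `x ≤ K`.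
    have hxK : ∀ᵐ ω ∂μ, x ω ≤ K := by
      rw [condExp_of_not_integrable hy] at hcond
      filter_upwards [hlow, hcond] with ω hl hh
      rw [← hh, Pi.zero_apply, mul_zero] at hl
      nlinarith
    have hmean : ∫ ω, x ω ∂μ ≤ K := by
      simpa using integral_mono_ae (hx.integrable one_le_two) (integrable_const K) hxK
    have := integral_sq_projected_step_le_of_nonneg hη hx hx' hx0 hyb hstep
    nlinarith [mul_le_mul_of_nonneg_left hmean (by positivity : 0 ≤ 2 * η * (C + b))]

end ProjectedStep

theorem stmt_14_general {Ω Θ : Type*} [MeasurableSpace Ω] {mΘ : MeasurableSpace Θ}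
    (μ : Measure Ω) [IsProbabilityMeasure μ]
    (δ : ℝ) (hδ : δ < 1 / 2)
    (V g : Θ → ℝ)
    (d : ℝ → ℝ) (hd : ∀ l : ℝ, 0 ≤ l → IsLUB (Set.range fun θ => V θ + l * g θ) (d l))
    (η : ℝ) (hη : 0 < η) (ε : ℝ) (hε : 0 ≤ ε)
    (lam ghat : ℕ → Ω → ℝ) (th : ℕ → Ω → Θ)
    (hthMeas : ∀ k : ℕ, Measurable (th (k + 1)))
    (hlam0 : ∀ᵐ ω ∂μ, 0 ≤ lam 0 ω)
    (hghatb : ∀ k : ℕ, ∀ᵐ ω ∂μ, |ghat k ω| ≤ 1 - δ)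
    (hupdate : ∀ k : ℕ, ∀ᵐ ω ∂μ, lam (k + 1) ω = max 0 (lam k ω - η * ghat k ω))
    (hprimal : ∀ k : ℕ, ∀ᵐ ω ∂μ,
      d (lam k ω) ≤ V (th (k + 1) ω) + lam k ω * g (th (k + 1) ω) + ε)
    (hadapted : ∀ k : ℕ, Measurable[MeasurableSpace.comap (th (k + 1)) mΘ] (lam k))
    (hunbiased : ∀ k : ℕ,
      μ[ghat k | MeasurableSpace.comap (th (k + 1)) mΘ] =ᵐ[μ] fun ω => g (th (k + 1) ω))
    (hlam0L2 : MemLp (lam 0) 2 μ)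
    -- strict feasibility
    (θtilde : Θ) (C : ℝ) (hC : 0 < C) (hstrict : C ≤ g θtilde) :
    ∃ M : ℝ, ∀ k : ℕ, 1 ≤ k →
      (1 / (k : ℝ)) * ∑ u ∈ Finset.range k, ∫ ω, lam u ω ∂μ ≤ M := by
  have hb : 0 ≤ 1 - δ := by linarith
  have hm k : MeasurableSpace.comap (th (k + 1)) mΘ ≤ ‹_› := (hthMeas k).comap_le
  have hnonneg : ∀ k, ∀ᵐ ω ∂μ, 0 ≤ lam k ω
    | 0 => hlam0
    | k + 1 => (hupdate k).mono fun ω hω => hω ▸ le_max_left _ _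
  have hL2 (k : ℕ) : MemLp (lam k) 2 μ := by
    induction k with
    | zero => exact hlam0L2
    | succ k ih =>
      exact memLp_two_of_projected_step hη.le ih
        ((hadapted (k + 1)).mono (hm (k + 1)) le_rfl).aestronglyMeasurable (hghatb k) (hupdate k)
  set K := (d 0 + ε - V θtilde) / C
  have hdual0 θ : V θ ≤ d 0 := by simpa using (hd 0 le_rfl).1 ⟨θ, rfl⟩
  have hK : 0 ≤ K := div_nonneg (by linarith [hdual0 θtilde]) hC.le
  have hlow k : ∀ᵐ ω ∂μ, C * (lam k ω - K) ≤ lam k ω * g (th (k + 1) ω) := by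
    filter_upwards [hprimal k, hnonneg k] with ω hp h0
    have := mul_le_dual_sub_of_le hd hstrict h0
    rw [mul_sub, mul_div_cancel₀ _ hC.ne']
    linarith [hdual0 (th (k + 1) ω)]
  exact ⟨_, fun k hk => cesaro_mean_le_of_drift (by positivity : 0 < 2 * η * C)
    (fun k => integral_nonneg fun ω => sq_nonneg (lam k ω))
    (fun k => integral_sq_projected_step_le (hm k) hη.le hb hC hK (hL2 k) (hL2 (k + 1))
      (hadapted k).stronglyMeasurable (hnonneg k) (hghatb k) (hupdate k) (hunbiased k) (hlow k))
    hk⟩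

/-- intermediate claim of Lemma 6: under the Safe Primal-Dual
dynamics and a strictly feasible point, the Cesàro means of the expected dual
iterates are uniformly bounded. -/
theorem stmt_14 {Ω Θ : Type*} [MeasurableSpace Ω] {mΘ : MeasurableSpace Θ}
    (μ : Measure Ω) [IsProbabilityMeasure μ]
    (δ : ℝ) (hδ0 : 0 < δ) (hδ : δ < 1 / 2)
    (V g : Θ → ℝ) (hV : Measurable V) (hg : Measurable g)
    (hgb : ∀ θ, |g θ| ≤ 1 - δ)
    (d : ℝ → ℝ) (hd : ∀ l : ℝ, 0 ≤ l → IsLUB (Set.range fun θ => V θ + l * g θ) (d l))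
    (lstar : ℝ) (hlstar : 0 ≤ lstar) (hmin : ∀ l : ℝ, 0 ≤ l → d lstar ≤ d l)
    (η : ℝ) (hη : 0 < η) (ε : ℝ) (hε : 0 ≤ ε)
    (lam ghat : ℕ → Ω → ℝ) (th : ℕ → Ω → Θ)
    (hthMeas : ∀ k : ℕ, Measurable (th (k + 1)))
    (hlam0 : ∀ᵐ ω ∂μ, 0 ≤ lam 0 ω)
    (hghatb : ∀ k : ℕ, ∀ᵐ ω ∂μ, |ghat k ω| ≤ 1 - δ)
    (hupdate : ∀ k : ℕ, ∀ᵐ ω ∂μ, lam (k + 1) ω = max 0 (lam k ω - η * ghat k ω))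
    (hprimal : ∀ k : ℕ, ∀ᵐ ω ∂μ,
      d (lam k ω) ≤ V (th (k + 1) ω) + lam k ω * g (th (k + 1) ω) + ε)
    (hadapted : ∀ k : ℕ, Measurable[MeasurableSpace.comap (th (k + 1)) mΘ] (lam k))
    (hunbiased : ∀ k : ℕ,
      μ[ghat k | MeasurableSpace.comap (th (k + 1)) mΘ] =ᵐ[μ] fun ω => g (th (k + 1) ω))
    (hlam0L2 : MemLp (lam 0) 2 μ)
    (hVint : ∀ k : ℕ, Integrable (fun ω => V (th (k + 1) ω)) μ)
    -- strict feasibility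
    (θtilde : Θ) (C : ℝ) (hC : 0 < C) (hstrict : C ≤ g θtilde) :
    ∃ M : ℝ, ∀ k : ℕ, 1 ≤ k →
      (1 / (k : ℝ)) * ∑ u ∈ Finset.range k, ∫ ω, lam u ω ∂μ ≤ M :=
  stmt_14_general μ δ hδ V g d hd η hη ε hε lam ghat th hthMeas hlam0 hghatb hupdate hprimal
    hadapted hunbiased hlam0L2 θtilde C hC hstrict
end

section
/- Let (a_k)_{k≥0} be a sequence of nonnegative real numbers and L ≥ 0 a constant such that |a_{k+1} − a_k| ≤ L for every k, and suppose sup_{k ≥ 1} (1/k)·Σ_{u=0}^{k−1} a_u < ∞. Then lim_{k→∞} a_k/k = 0. -/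
open Finset Filter

/-- a nonnegative real sequence with uniformly bounded increments
and bounded Cesàro means satisfies `a k / k → 0`. -/
theorem stmt_15 (a : ℕ → ℝ) (L : ℝ) (hL : 0 ≤ L)
    (ha : ∀ k, 0 ≤ a k)
    (hinc : ∀ k, |a (k + 1) - a k| ≤ L)
    (hbdd : ∃ M : ℝ, ∀ k : ℕ, 1 ≤ k →
      (1 / (k : ℝ)) * ∑ u ∈ Finset.range k, a u ≤ M) :
    Filter.Tendsto (fun k : ℕ => a k / (k : ℝ)) Filter.atTop (nhds 0) := by
  obtain ⟨M, hM⟩ := hbdd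
  have hM0 : 0 ≤ M := le_trans (by simpa using ha 0) (by simpa using hM 1 le_rfl)
  -- key inequality: (m+1) * a k ≤ M * (k+m+1) + L * m * (m+1)
  have key : ∀ k m : ℕ, ((m : ℝ) + 1) * a k ≤ M * ((k : ℝ) + m + 1) + L * m * (m + 1) := by
    intro k m
    have hstep : ∀ j : ℕ, a k - L * j ≤ a (k + j) := by
      intro j
      induction j with
      | zero => simp
      | succ j ih =>
        have h1 := (abs_le.mp (hinc (k + j))).1
        have : a k - L * j - L ≤ a (k + j + 1) := by linarith
        have heq : k + (j + 1) = k + j + 1 := by omega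
        rw [heq]
        push_cast
        linarith
    have h1 : ∑ j ∈ Finset.range (m + 1), (a k - L * m) ≤
        ∑ j ∈ Finset.range (m + 1), a (k + j) := by
      apply Finset.sum_le_sum
      intro j hj
      have hjm : (j : ℝ) ≤ m := by
        exact_mod_cast Nat.le_of_lt_succ (Finset.mem_range.mp hj)
      have hLj : L * j ≤ L * m := mul_le_mul_of_nonneg_left hjm hL
      have := hstep j
      linarith
    have h2 : ∑ j ∈ Finset.range (m + 1), a (k + j) ≤
        ∑ u ∈ Finset.range (k + (m + 1)), a u := by
      have hsplit := Finset.sum_range_add a k (m + 1)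
      have : 0 ≤ ∑ u ∈ Finset.range k, a u := Finset.sum_nonneg fun i _ => ha i
      linarith
    have h3 : ∑ u ∈ Finset.range (k + (m + 1)), a u ≤ M * ((k : ℝ) + m + 1) := by
      have hk1 : 1 ≤ k + (m + 1) := by omega
      have := hM (k + (m + 1)) hk1
      have hkpos : (0 : ℝ) < (k + (m + 1) : ℕ) := by exact_mod_cast Nat.pos_of_ne_zero (by omega)
      rw [one_div, inv_mul_le_iff₀ hkpos] at this
      calc ∑ u ∈ Finset.range (k + (m + 1)), a u ≤ M * ((k + (m + 1) : ℕ) : ℝ) := by linarith [this]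
        _ = M * ((k : ℝ) + m + 1) := by push_cast; ring
    have h4 : ∑ j ∈ Finset.range (m + 1), (a k - L * m) = ((m : ℝ) + 1) * (a k - L * m) := by
      rw [Finset.sum_const, Finset.card_range]; push_cast; ring
    nlinarith [h1, h2, h3]
  rw [Metric.tendsto_atTop]
  intro ε hε
  obtain ⟨m, hm⟩ := exists_nat_gt (2 * M / ε)
  have hm1 : M < ε / 2 * ((m : ℝ) + 1) := by
    have h : 2 * M / ε < (m : ℝ) := hm
    rw [div_lt_iff₀ hε] at h
    nlinarith
  obtain ⟨N, hN⟩ := exists_nat_gt (2 * (M + L * m) / ε)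
  refine ⟨max N 1, fun k hk => ?_⟩
  have hk1 : 1 ≤ k := le_trans (le_max_right N 1) hk
  have hkN : (N : ℝ) ≤ k := by exact_mod_cast le_trans (le_max_left N 1) hk
  have hkpos : (0 : ℝ) < k := by exact_mod_cast hk1
  have h5 : M + L * m < ε / 2 * k := by
    have h : 2 * (M + L * m) / ε < (N : ℝ) := hN
    rw [div_lt_iff₀ hε] at h
    nlinarith
  have hkey := key k m
  have hak : a k < ε * k := by
    have hmpos : (0 : ℝ) < (m : ℝ) + 1 := by positivity
    nlinarith [mul_le_mul_of_nonneg_left hm1.le hkpos.le, ha k]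
  rw [Real.dist_eq, sub_zero, abs_of_nonneg (div_nonneg (ha k) hkpos.le)]
  rw [div_lt_iff₀ hkpos]
  linarith
end

section
/- Stochastic primal-dual setup: let (Ω, ℱ, ℙ) be a probability space, Θ a measurable space, δ ∈ (0, 1/2), and V, g : Θ → ℝ measurable with |g(θ)| ≤ 1 − δ for all θ; assume the dual function d(λ) := sup_{θ∈Θ} (V(θ) + λ·g(θ)) is finite for every λ ≥ 0, and that λ⋆ ≥ 0 satisfies d(λ⋆) = inf_{λ ≥ 0} d(λ). Fix η > 0, ε ≥ 0. Let (λ_k)_{k≥0}, (ĝ_k)_{k≥0} be real-valued random variables and (θ_k)_{k≥1} Θ-valued random variables such that for every k ≥ 0, almost surely: λ₀ ≥ 0; |ĝ_k| ≤ 1 − δ; λ_{k+1} = max(0, λ_k − η·ĝ_k); d(λ_k) ≤ V(θ_{k+1}) + λ_k·g(θ_{k+1}) + ε; λ_k is σ(θ_{k+1})-measurable and E[ĝ_k | σ(θ_{k+1})] = g(θ_{k+1}); λ₀ is square-integrable and each V(θ_{k+1}) is integrable. Suppose additionally there exist θ̃ ∈ Θ and C > 0 with g(θ̃) ≥ C (strict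 feasibility). Then limsup_{k→∞} E[λ_k]/k = 0. -/
open MeasureTheory Filter Topology

/-!
Strict feasibility and ε-optimality of the primal step give, for `λ ≥ 0`,
`λ g(θ_{k+1}) ≥ C λ - B` with `B = ε + d 0 - V θ̃`; by conditional unbiasedness this lower-bounds
`E[λ_k ĝ_k]` by `-B`. Expanding the square of the projected step
`λ_{k+1} = max 0 (λ_k - η ĝ_k)` then shows that `E[λ_k²]` grows at most linearly in `k`,
so `E[λ_k] ≤ √(E[λ_k²]) = O(√k)` and `E[λ_k] / k → 0`.
-/

theorem abs_max_zero_sub_mul_le {x y η G : ℝ} (hη : 0 ≤ η) (hy : |y| ≤ G) :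
    |max 0 (x - η * y)| ≤ |x| + η * G := by
  have hηy : |η * y| ≤ η * G := by
    rw [abs_mul, abs_of_nonneg hη]
    exact mul_le_mul_of_nonneg_left hy hη
  have hG : 0 ≤ G := (abs_nonneg _).trans hy
  rw [abs_of_nonneg (le_max_left _ _)]
  exact max_le (by positivity) ((le_abs_self _).trans ((abs_sub _ _).trans (by linarith)))

theorem max_zero_sub_mul_sq_le {x y η G : ℝ} (hy : |y| ≤ G) :
    max 0 (x - η * y) ^ 2 ≤ x ^ 2 - 2 * η * (x * y) + η ^ 2 * G ^ 2 := by
  have hmax : max 0 (x - η * y) ^ 2 ≤ (x - η * y) ^ 2 :=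
    pow_le_pow_left₀ (le_max_left _ _) (max_le (abs_nonneg _) (le_abs_self _)) 2 |>.trans
      (sq_abs _).le
  have hy2 : y ^ 2 ≤ G ^ 2 := sq_le_sq' (abs_le.1 hy).1 (abs_le.1 hy).2
  nlinarith [mul_le_mul_of_nonneg_left hy2 (sq_nonneg η)]

theorem mul_sub_le_mul_of_le_dual {Θ : Type*} {V g : Θ → ℝ} {d : ℝ → ℝ}
    (hd : ∀ l : ℝ, 0 ≤ l → ∀ θ, V θ + l * g θ ≤ d l)
    {θ₀ θ : Θ} {C ε l : ℝ} (hC : C ≤ g θ₀) (hl : 0 ≤ l) (hθ : d l ≤ V θ + l * g θ + ε) :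
    C * l - (ε + d 0 - V θ₀) ≤ l * g θ := by
  nlinarith [mul_le_mul_of_nonneg_left hC hl, hd l hl θ₀, hd 0 le_rfl θ]

theorem tendsto_div_natCast_of_sq_le {a b : ℕ → ℝ} {K : ℝ} (hab : ∀ k, a k ^ 2 ≤ b k)
    (hb : ∀ k, b (k + 1) ≤ b k + K) : Tendsto (fun k : ℕ => a k / k) atTop (𝓝 0) := by
  have hlin : ∀ k : ℕ, b k ≤ b 0 + K * k := by
    intro k
    induction k with
    | zero => simp
    | succ k ih => push_cast; linarith [hb k]
  have hinv := tendsto_one_div_atTop_nhds_zero_nat (𝕜 := ℝ)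
  have hlim : Tendsto (fun k : ℕ => √(b 0 * (1 / k) ^ 2 + K * (1 / k))) atTop (𝓝 0) := by
    simpa using (((hinv.pow 2).const_mul (b 0)).add (hinv.const_mul K)).sqrt
  refine squeeze_zero_norm (fun k => Real.abs_le_sqrt ?_) hlim
  calc (a k / k) ^ 2 = a k ^ 2 * (1 / k) ^ 2 := by ring
    _ ≤ (b 0 + K * k) * (1 / k) ^ 2 := by gcongr; exact (hab k).trans (hlin k)
    _ = b 0 * (1 / k) ^ 2 + K * (1 / k) := by
      rcases k.eq_zero_or_pos with rfl | hk
      · simp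
      · field_simp

section ProjectedStep

variable {Ω : Type*} {m mΩ : MeasurableSpace Ω} {μ : Measure Ω} {x x' y γ : Ω → ℝ}
  {p : ENNReal} {η G : ℝ}

theorem MeasureTheory.MemLp.of_ae_eq_max_zero_sub [IsFiniteMeasure μ] (hx : MemLp x p μ)
    (hx' : AEStronglyMeasurable x' μ) (hη : 0 ≤ η) (hy : ∀ᵐ ω ∂μ, |y ω| ≤ G)
    (hupd : ∀ᵐ ω ∂μ, x' ω = max 0 (x ω - η * y ω)) : MemLp x' p μ := by
  refine (hx.norm.add (memLp_const (η * G))).of_le hx' ?_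
  filter_upwards [hupd, hy] with ω hω hyω
  simp only [Real.norm_eq_abs, Pi.add_apply, hω]
  exact (abs_max_zero_sub_mul_le hη hyω).trans (le_abs_self _)

variable [IsProbabilityMeasure μ]

theorem sq_integral_le_integral_sq (hx : MemLp x 2 μ) :
    (∫ ω, x ω ∂μ) ^ 2 ≤ ∫ ω, x ω ^ 2 ∂μ := by
  have := ProbabilityTheory.variance_nonneg x μ
  rw [ProbabilityTheory.variance_eq_sub hx] at this
  exact sub_nonneg.1 this

theorem integral_sq_le_of_ae_eq_max_zero_sub (hx : MemLp x 2 μ)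
    (hxy : Integrable (fun ω => x ω * y ω) μ)
    (hy : ∀ᵐ ω ∂μ, |y ω| ≤ G) (hupd : ∀ᵐ ω ∂μ, x' ω = max 0 (x ω - η * y ω)) :
    ∫ ω, x' ω ^ 2 ∂μ ≤ ∫ ω, x ω ^ 2 ∂μ - 2 * η * ∫ ω, x ω * y ω ∂μ + η ^ 2 * G ^ 2 := by
  have hsq : Integrable (fun ω => x ω ^ 2) μ := hx.integrable_sq
  have hcross : Integrable (fun ω => 2 * η * (x ω * y ω)) μ := hxy.const_mul _
  have hdiff : Integrable (fun ω => x ω ^ 2 - 2 * η * (x ω * y ω)) μ := hsq.sub hcross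
  calc ∫ ω, x' ω ^ 2 ∂μ
      ≤ ∫ ω, (x ω ^ 2 - 2 * η * (x ω * y ω) + η ^ 2 * G ^ 2) ∂μ := by
        refine integral_mono_of_nonneg (ae_of_all _ fun ω => sq_nonneg _)
          (hdiff.add (integrable_const _)) ?_
        filter_upwards [hupd, hy] with ω hω hyω
        rw [hω]
        exact max_zero_sub_mul_sq_le hyω
    _ = _ := by
        rw [integral_add hdiff (integrable_const _), integral_sub hsq hcross, integral_const_mul]
        simp

theorem integral_sq_le_add_of_condExp_ae_eq (hm : m ≤ mΩ) (hη : 0 ≤ η) {B C : ℝ} (hC : 0 < C)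
    (hx : StronglyMeasurable[m] x) (hxL2 : MemLp x 2 μ) (hx0 : ∀ᵐ ω ∂μ, 0 ≤ x ω)
    (hy : ∀ᵐ ω ∂μ, |y ω| ≤ G) (hupd : ∀ᵐ ω ∂μ, x' ω = max 0 (x ω - η * y ω))
    (hcond : μ[y | m] =ᵐ[μ] γ) (hγ : ∀ᵐ ω ∂μ, C * x ω - B ≤ x ω * γ ω) :
    ∫ ω, x' ω ^ 2 ∂μ ≤
      ∫ ω, x ω ^ 2 ∂μ + max (2 * η * B + η ^ 2 * G ^ 2) ((B / C + η * G) ^ 2) := by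
  by_cases hyi : Integrable y μ
  · have hxy : Integrable (x * y) μ :=
      (hxL2.integrable one_le_two).mul_bdd hyi.1 (hy.mono fun ω h => by rwa [Real.norm_eq_abs])
    have hpull : μ[x * y | m] =ᵐ[μ] x * γ :=
      (condExp_mul_of_stronglyMeasurable_left hx hxy hyi).trans
        (hcond.mono fun ω h => by simp only [Pi.mul_apply, h])
    have hcross : -B ≤ ∫ ω, x ω * y ω ∂μ :=
      calc -B = ∫ _, -B ∂μ := by simp
        _ ≤ ∫ ω, x ω * γ ω ∂μ := by
          refine integral_mono_ae (integrable_const _) (integrable_condExp.congr hpull) ?_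
          filter_upwards [hγ, hx0] with ω hγω hx0ω
          nlinarith
        _ = ∫ ω, x ω * y ω ∂μ := (integral_congr_ae hpull.symm).trans (integral_condExp hm)
    calc ∫ ω, x' ω ^ 2 ∂μ
        ≤ ∫ ω, x ω ^ 2 ∂μ - 2 * η * ∫ ω, x ω * y ω ∂μ + η ^ 2 * G ^ 2 :=
          integral_sq_le_of_ae_eq_max_zero_sub hxL2 hxy hy hupd
      _ ≤ ∫ ω, x ω ^ 2 ∂μ + (2 * η * B + η ^ 2 * G ^ 2) := by
          nlinarith [mul_le_mul_of_nonneg_left hcross (by positivity : (0 : ℝ) ≤ 2 * η)]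
      _ ≤ _ := by gcongr; exact le_max_left _ _
  · -- without integrability the conditional expectation is `0`, so `γ = 0` and `x ≤ B / C`
    have hγ0 : γ =ᵐ[μ] 0 := hcond.symm.trans (condExp_of_not_integrable hyi).eventuallyEq
    have hx' : ∀ᵐ ω ∂μ, 0 ≤ x' ω ∧ x' ω ≤ B / C + η * G := by
      filter_upwards [hupd, hy, hx0, hγ, hγ0] with ω hω hyω hx0ω hγω hγ0ω
      have hxB : x ω ≤ B / C := by
        rw [le_div_iff₀ hC]
        simp only [hγ0ω, Pi.zero_apply, mul_zero] at hγω
        linarith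
      rw [hω]
      refine ⟨le_max_left _ _, (le_abs_self _).trans ((abs_max_zero_sub_mul_le hη hyω).trans ?_)⟩
      rw [abs_of_nonneg hx0ω]
      linarith
    calc ∫ ω, x' ω ^ 2 ∂μ ≤ ∫ _, (B / C + η * G) ^ 2 ∂μ := by
          refine integral_mono_of_nonneg (ae_of_all _ fun _ => sq_nonneg _) (integrable_const _) ?_
          filter_upwards [hx'] with ω hω
          exact pow_le_pow_left₀ hω.1 hω.2 2
      _ = (B / C + η * G) ^ 2 := by simp
      _ ≤ _ := le_add_of_nonneg_of_le (integral_nonneg fun _ => sq_nonneg _) (le_max_right _ _)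

end ProjectedStep

theorem stmt_16_general {Ω Θ : Type*} [MeasurableSpace Ω] {mΘ : MeasurableSpace Θ}
    (μ : Measure Ω) [IsProbabilityMeasure μ]
    (δ : ℝ)
    (V g : Θ → ℝ)
    (d : ℝ → ℝ) (hd : ∀ l : ℝ, 0 ≤ l → IsLUB (Set.range fun θ => V θ + l * g θ) (d l))
    (η : ℝ) (hη : 0 < η) (ε : ℝ)
    (lam ghat : ℕ → Ω → ℝ) (th : ℕ → Ω → Θ)
    (hthMeas : ∀ k : ℕ, Measurable (th (k + 1)))
    (hlam0 : ∀ᵐ ω ∂μ, 0 ≤ lam 0 ω)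
    (hghatb : ∀ k : ℕ, ∀ᵐ ω ∂μ, |ghat k ω| ≤ 1 - δ)
    (hupdate : ∀ k : ℕ, ∀ᵐ ω ∂μ, lam (k + 1) ω = max 0 (lam k ω - η * ghat k ω))
    (hprimal : ∀ k : ℕ, ∀ᵐ ω ∂μ,
      d (lam k ω) ≤ V (th (k + 1) ω) + lam k ω * g (th (k + 1) ω) + ε)
    (hadapted : ∀ k : ℕ, Measurable[MeasurableSpace.comap (th (k + 1)) mΘ] (lam k))
    (hunbiased : ∀ k : ℕ,
      μ[ghat k | MeasurableSpace.comap (th (k + 1)) mΘ] =ᵐ[μ] fun ω => g (th (k + 1) ω))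
    (hlam0L2 : MemLp (lam 0) 2 μ)
    -- strict feasibility
    (θtilde : Θ) (C : ℝ) (hC : 0 < C) (hstrict : C ≤ g θtilde) :
    Filter.limsup (fun k : ℕ => (∫ ω, lam k ω ∂μ) / (k : ℝ)) Filter.atTop = 0 := by
  have hnonneg : ∀ k, ∀ᵐ ω ∂μ, 0 ≤ lam k ω
    | 0 => hlam0
    | k + 1 => (hupdate k).mono fun ω h => h ▸ le_max_left _ _
  have hL2 : ∀ k, MemLp (lam k) 2 μ := by
    intro k
    induction k with
    | zero => exact hlam0L2
    | succ k ih =>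
      exact ih.of_ae_eq_max_zero_sub
        ((hadapted (k + 1)).mono (hthMeas (k + 1)).comap_le le_rfl).aestronglyMeasurable
        hη.le (hghatb k) (hupdate k)
  have hfeasible : ∀ k, ∀ᵐ ω ∂μ,
      C * lam k ω - (ε + d 0 - V θtilde) ≤ lam k ω * g (th (k + 1) ω) := fun k => by
    filter_upwards [hprimal k, hnonneg k] with ω hω h0
    exact mul_sub_le_mul_of_le_dual (fun l hl θ => (hd l hl).1 ⟨θ, rfl⟩) hstrict h0 hω
  have hstep k := integral_sq_le_add_of_condExp_ae_eq (hthMeas k).comap_le hη.le hC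
    (hadapted k).stronglyMeasurable (hL2 k) (hnonneg k) (hghatb k) (hupdate k) (hunbiased k)
    (hfeasible k)
  exact (tendsto_div_natCast_of_sq_le (fun k => sq_integral_le_integral_sq (hL2 k))
    hstep).limsup_eq

/-- Lemma 6: under the Safe Primal-Dual
dynamics and a strictly feasible point, the expected dual iterates grow
sublinearly: `limsup E[λ_k]/k = 0`. -/
theorem stmt_16 {Ω Θ : Type*} [MeasurableSpace Ω] {mΘ : MeasurableSpace Θ}
    (μ : Measure Ω) [IsProbabilityMeasure μ]
    (δ : ℝ) (hδ0 : 0 < δ) (hδ : δ < 1 / 2)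
    (V g : Θ → ℝ) (hV : Measurable V) (hg : Measurable g)
    (hgb : ∀ θ, |g θ| ≤ 1 - δ)
    (d : ℝ → ℝ) (hd : ∀ l : ℝ, 0 ≤ l → IsLUB (Set.range fun θ => V θ + l * g θ) (d l))
    (lstar : ℝ) (hlstar : 0 ≤ lstar) (hmin : ∀ l : ℝ, 0 ≤ l → d lstar ≤ d l)
    (η : ℝ) (hη : 0 < η) (ε : ℝ) (hε : 0 ≤ ε)
    (lam ghat : ℕ → Ω → ℝ) (th : ℕ → Ω → Θ)
    (hthMeas : ∀ k : ℕ, Measurable (th (k + 1)))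
    (hlam0 : ∀ᵐ ω ∂μ, 0 ≤ lam 0 ω)
    (hghatb : ∀ k : ℕ, ∀ᵐ ω ∂μ, |ghat k ω| ≤ 1 - δ)
    (hupdate : ∀ k : ℕ, ∀ᵐ ω ∂μ, lam (k + 1) ω = max 0 (lam k ω - η * ghat k ω))
    (hprimal : ∀ k : ℕ, ∀ᵐ ω ∂μ,
      d (lam k ω) ≤ V (th (k + 1) ω) + lam k ω * g (th (k + 1) ω) + ε)
    (hadapted : ∀ k : ℕ, Measurable[MeasurableSpace.comap (th (k + 1)) mΘ] (lam k))
    (hunbiased : ∀ k : ℕ,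
      μ[ghat k | MeasurableSpace.comap (th (k + 1)) mΘ] =ᵐ[μ] fun ω => g (th (k + 1) ω))
    (hlam0L2 : MemLp (lam 0) 2 μ)
    (hVint : ∀ k : ℕ, Integrable (fun ω => V (th (k + 1) ω)) μ)
    -- strict feasibility
    (θtilde : Θ) (C : ℝ) (hC : 0 < C) (hstrict : C ≤ g θtilde) :
    Filter.limsup (fun k : ℕ => (∫ ω, lam k ω ∂μ) / (k : ℝ)) Filter.atTop = 0 :=
  stmt_16_general μ δ V g d hd η hη ε lam ghat th hthMeas hlam0 hghatb hupdate hprimal hadapted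
    hunbiased hlam0L2 θtilde C hC hstrict
end
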